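/- Suppose n ≥ 3, A is an arm sequence, and λ is an A-regular partition with λ ≠ ∅. Then there exists i ∈ ℤ/nℤ such that ẽ_i λ ≠ 0; that is, λ has a good node of some residue. -/

import Mathlib

/-!  Partitions, arm sequences and the crystal operators `ẽ_i`, `f̃_i` of the paper
"Partition models for the crystal of the basic `U_q(ŝl_n)`-module".

A partition is modelled as a function `l : ℕ → ℕ` listing the parts, with rows indexed
from `0`; the Young diagram consists of the nodes `(a, c)` (row `a`, column `c`, both
`0`-indexed) with `c < l a`.  The node `(a, c)` here corresponds to the node
`(a + 1, c + 1)` in the (1-indexed) conventions of the paper; in particular its residue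
is `c - a (mod n)`, its arm length is `l a - c - 1`, and its hook length is
`l a - c + l' c - a - 1`, where `l'` is the conjugate partition. -/

attribute [local instance] Classical.propDecidable

namespace ArmCrystal

/-- `l` is a partition: weakly decreasing with some part equal to `0`. -/
def IsPartition (l : ℕ → ℕ) : Prop := (∀ a, l (a + 1) ≤ l a) ∧ ∃ N, l N = 0

/-- The conjugate partition: `conj l c` is the number of rows `a` with `l a > c`,
i.e. the number of nodes in column `c`. -/
noncomputable def conj (l : ℕ → ℕ) (c : ℕ) : ℕ := sInf {a | l a ≤ c}

/-- `A` is an arm sequence for `n`: `t - 1 ≤ A t ≤ (n-1)t` for `t ≥ 1`, and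
`A (t + u) ∈ {A t + A u, A t + A u + 1}`.  (The value `A 0` is irrelevant; in the
definition of the order on nodes it is read as `0`, via `Aext`.) -/
def IsArmSeq (n : ℕ) (A : ℕ → ℤ) : Prop :=
  (∀ t : ℕ, 1 ≤ t → (t : ℤ) - 1 ≤ A t ∧ A t ≤ ((n : ℤ) - 1) * t) ∧
  (∀ t u : ℕ, 1 ≤ t → 1 ≤ u → A (t + u) = A t + A u ∨ A (t + u) = A t + A u + 1)

/-- `A` extended by `A 0 = 0`. -/
def Aext (A : ℕ → ℤ) (t : ℕ) : ℤ := if t = 0 then 0 else A t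

/-- The `(a, c)`-hook of `l` is illegal with parameter `t ≥ 1`: `(a, c)` is a node of
`l` whose hook length is `n * t` and whose arm length is `A t`. -/
def IllegalHook (n : ℕ) (A : ℕ → ℤ) (l : ℕ → ℕ) (a c t : ℕ) : Prop :=
  1 ≤ t ∧ c < l a ∧
  ((l a : ℤ) + conj l c = (n : ℤ) * t + a + c + 1) ∧
  ((l a : ℤ) = A t + c + 1)

/-- `l` is `A`-regular: it has no illegal hook. -/
def ARegular (n : ℕ) (A : ℕ → ℤ) (l : ℕ → ℕ) : Prop :=
  ¬ ∃ a c t, IllegalHook n A l a c t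

/-- `(a, c)` is a removable node of `l`. -/
def Removable (l : ℕ → ℕ) (a c : ℕ) : Prop := l a = c + 1 ∧ l (a + 1) ≤ c

/-- `(a, c)` is an addable node of `l`. -/
def Addable (l : ℕ → ℕ) (a c : ℕ) : Prop := l a = c ∧ (a = 0 ∨ c < l (a - 1))

/-- The residue of the node `(a, c)` (0-indexed), namely `c - a ∈ ℤ/nℤ`. -/
def res (n : ℕ) (x : ℕ × ℕ) : ZMod n := (x.2 : ZMod n) - (x.1 : ZMod n)

/-- The total order `≻` determined by the arm sequence `A` on the nodes of a fixed
residue: for distinct same-residue nodes `x = (a, c)` and `y = (b, d)`, if the axial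
distance `b - a + c - d` equals `n t` with `t ≥ 0` then `x ≻ y` iff `c - d > A t`, while
if `a - b + d - c = n t` with `t ≥ 0` then `x ≻ y` iff `d - c ≤ A t` (reading `A 0 = 0`). -/
def NodeGt (n : ℕ) (A : ℕ → ℤ) (x y : ℕ × ℕ) : Prop :=
  (∃ t : ℕ, (y.1 : ℤ) - x.1 + x.2 - y.2 = (n : ℤ) * t ∧ Aext A t < (x.2 : ℤ) - y.2) ∨
  (∃ t : ℕ, (x.1 : ℤ) - y.1 + y.2 - x.2 = (n : ℤ) * t ∧ (y.2 : ℤ) - x.2 ≤ Aext A t ∧ x ≠ y)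

/-- The (finite) set of addable and removable `i`-nodes of `l`. -/
noncomputable def ARset (n : ℕ) (l : ℕ → ℕ) (i : ZMod n) : Finset (ℕ × ℕ) :=
  ((Finset.range (conj l 0 + 1)) ×ˢ (Finset.range (l 0 + 1))).filter
    (fun x => res n x = i ∧ (Addable l x.1 x.2 ∨ Removable l x.1 x.2))

/-- The sign of a node in the ±-sequence: `+1` if addable, `-1` if removable. -/
noncomputable def sgnNode (l : ℕ → ℕ) (x : ℕ × ℕ) : ℤ :=
  if Addable l x.1 x.2 then 1 else if Removable l x.1 x.2 then -1 else 0

/-- Minus the partial sum of signs over the addable/removable `i`-nodes `y ⪰ x`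
(the prefix of the ±-sequence ending at `x`, the nodes being listed in decreasing
`≻`-order). -/
noncomputable def Gnode (n : ℕ) (A : ℕ → ℤ) (l : ℕ → ℕ) (i : ZMod n) (x : ℕ × ℕ) : ℤ :=
  -(∑ y ∈ (ARset n l i).filter (fun y => y = x ∨ NodeGt n A y x), sgnNode l y)

/-- The sum of signs over the addable/removable `i`-nodes `y ⪯ x` (the suffix of the
±-sequence starting at `x`). -/
noncomputable def Hnode (n : ℕ) (A : ℕ → ℤ) (l : ℕ → ℕ) (i : ZMod n) (x : ℕ × ℕ) : ℤ :=
  ∑ y ∈ (ARset n l i).filter (fun y => y = x ∨ NodeGt n A x y), sgnNode l y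

/-- `ε_i(λ)`: the maximum of `0` and the partial sums `Gnode`. -/
noncomputable def epsP (n : ℕ) (A : ℕ → ℤ) (l : ℕ → ℕ) (i : ZMod n) : ℤ :=
  (ARset n l i).fold max 0 (Gnode n A l i)

/-- `φ_i(λ)`: the maximum of `0` and the partial sums `Hnode`. -/
noncomputable def phiP (n : ℕ) (A : ℕ → ℤ) (l : ℕ → ℕ) (i : ZMod n) : ℤ :=
  (ARset n l i).fold max 0 (Hnode n A l i)

/-- The `i`-good node of `l`: the node in the good position of the ±-sequence, i.e. the
`≻`-greatest addable/removable `i`-node achieving `Gnode = ε_i > 0` (or `none`). -/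
noncomputable def goodNode (n : ℕ) (A : ℕ → ℤ) (l : ℕ → ℕ) (i : ZMod n) : Option (ℕ × ℕ) :=
  if hx : ∃ x ∈ ARset n l i, 0 < epsP n A l i ∧ Gnode n A l i x = epsP n A l i ∧
      ∀ y ∈ ARset n l i, NodeGt n A y x → Gnode n A l i y ≠ epsP n A l i
  then some hx.choose else none

/-- The `i`-cogood node of `l`: the node in the cogood position of the ±-sequence, i.e.
the `≻`-least addable/removable `i`-node achieving `Hnode = φ_i > 0` (or `none`). -/
noncomputable def cogoodNode (n : ℕ) (A : ℕ → ℤ) (l : ℕ → ℕ) (i : ZMod n) :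
    Option (ℕ × ℕ) :=
  if hx : ∃ x ∈ ARset n l i, 0 < phiP n A l i ∧ Hnode n A l i x = phiP n A l i ∧
      ∀ y ∈ ARset n l i, NodeGt n A x y → Hnode n A l i y ≠ phiP n A l i
  then some hx.choose else none

/-- The crystal operator `ẽ_i`: remove the `i`-good node (shorten its row by one), or
`none` (the ghost element `0`) if there is none. -/
noncomputable def et (n : ℕ) (A : ℕ → ℤ) (l : ℕ → ℕ) (i : ZMod n) : Option (ℕ → ℕ) :=
  (goodNode n A l i).map fun x => Function.update l x.1 (l x.1 - 1)

/-- The crystal operator `f̃_i`: add the `i`-cogood node (lengthen its row by one), or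
`none` (the ghost element `0`) if there is none. -/
noncomputable def ft (n : ℕ) (A : ℕ → ℤ) (l : ℕ → ℕ) (i : ZMod n) : Option (ℕ → ℕ) :=
  (cogoodNode n A l i).map fun x => Function.update l x.1 (l x.1 + 1)

/-! Rank the nodes by the linear key `(n u - A u) c + (A u) a`, of slope `A u / (n u)`, with `u`
larger than the diagram, and let `x` be a removable node of maximal key. By `A`-regularity an
addable node `≻ x` would have key exceeding that of `x` by more than `(n - 1) u + 1`, while
every addable node has a removable neighbour (the end of the row above it, or of the first
block of rows) whose key is smaller by at most that much. So the ±-sequence of residue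
`res x` begins with `-`'s up to `x`, its partial sum there is negative, and `ẽ_{res x} λ ≠ 0`.
The cross estimate `t A u ≤ u A t + u - 1` of an arm sequence is what turns the arm
conditions of `≻` into inequalities between keys. -/

lemma Aext_of_ne_zero (A : ℕ → ℤ) {t : ℕ} (ht : t ≠ 0) : Aext A t = A t := if_neg ht

section ArmSequence

variable {n : ℕ} {A : ℕ → ℤ}

lemma IsArmSeq.pos (hA : IsArmSeq n A) : 0 < n := by
  have := hA.1 1 le_rfl
  omega

lemma IsArmSeq.sub_one_le_Aext (hA : IsArmSeq n A) (t : ℕ) : (t : ℤ) - 1 ≤ Aext A t := by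
  rcases Nat.eq_zero_or_pos t with rfl | ht
  · simp [Aext]
  · rw [Aext_of_ne_zero A ht.ne']
    exact (hA.1 t ht).1

lemma IsArmSeq.Aext_le (hA : IsArmSeq n A) (t : ℕ) : Aext A t ≤ ((n : ℤ) - 1) * t := by
  rcases Nat.eq_zero_or_pos t with rfl | ht
  · simp [Aext]
  · rw [Aext_of_ne_zero A ht.ne']
    exact (hA.1 t ht).2

lemma IsArmSeq.Aext_nonneg (hA : IsArmSeq n A) (t : ℕ) : 0 ≤ Aext A t := by
  rcases Nat.eq_zero_or_pos t with rfl | ht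
  · simp [Aext]
  · have := hA.sub_one_le_Aext t
    have : (1 : ℤ) ≤ t := by exact_mod_cast ht
    linarith

lemma IsArmSeq.Aext_add_mem_Icc (hA : IsArmSeq n A) (t u : ℕ) :
    Aext A (t + u) ∈ Set.Icc (Aext A t + Aext A u) (Aext A t + Aext A u + 1) := by
  rcases Nat.eq_zero_or_pos t with rfl | ht
  · simp [Aext]
  rcases Nat.eq_zero_or_pos u with rfl | hu
  · simp [Aext]
  rw [Aext_of_ne_zero A ht.ne', Aext_of_ne_zero A hu.ne', Aext_of_ne_zero A (by omega),
    Set.mem_Icc]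
  rcases hA.2 t u ht hu with h | h <;> omega

lemma IsArmSeq.natCast_mul_Aext_le (hA : IsArmSeq n A) (k t : ℕ) :
    (k : ℤ) * Aext A t ≤ Aext A (k * t) := by
  induction k with
  | zero => simp [Aext]
  | succ k ih =>
    have := (hA.Aext_add_mem_Icc (k * t) t).1
    rw [Nat.succ_mul]
    push_cast
    linarith

lemma IsArmSeq.Aext_mul_le (hA : IsArmSeq n A) {k : ℕ} (hk : 1 ≤ k) (t : ℕ) :
    Aext A (k * t) ≤ k * Aext A t + k - 1 := by
  induction k, hk using Nat.le_induction with
  | base => simp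
  | succ k hk ih =>
    have := (hA.Aext_add_mem_Icc (k * t) t).2
    rw [Nat.succ_mul]
    push_cast
    linarith

/-- Both sides are estimates of `Aext A (t * u)`. -/
lemma IsArmSeq.mul_Aext_le_mul_Aext (hA : IsArmSeq n A) (t : ℕ) {u : ℕ} (hu : 1 ≤ u) :
    (t : ℤ) * Aext A u ≤ u * Aext A t + u - 1 := by
  have h₁ := hA.natCast_mul_Aext_le t u
  have h₂ := hA.Aext_mul_le hu t
  rw [Nat.mul_comm] at h₂
  linarith

/-- The threshold of `≻` as a function of the signed axial distance `n * k`; negative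
distances encode the second clause of `NodeGt` (`d - c ≤ A t` iff `-A t - 1 < c - d`). -/
def armExt (A : ℕ → ℤ) : ℤ → ℤ
  | .ofNat t => Aext A t
  | .negSucc t => -Aext A (t + 1) - 1

lemma IsArmSeq.armExt_add_le (hA : IsArmSeq n A) (j k : ℤ) :
    armExt A (j + k) ≤ armExt A j + armExt A k + 1 := by
  rcases j with p | p <;> rcases k with q | q <;> rcases h : _ + _ with r | r <;>
    simp only [Int.ofNat_eq_natCast, Int.negSucc_eq] at h <;> simp only [armExt]
  · obtain rfl : r = p + q := by omega
    exact (hA.Aext_add_mem_Icc p q).2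
  · omega
  · obtain rfl : p = r + (q + 1) := by omega
    linarith [(hA.Aext_add_mem_Icc r (q + 1)).1]
  · rw [show q + 1 = p + (r + 1) by omega]
    linarith [(hA.Aext_add_mem_Icc p (r + 1)).2]
  · obtain rfl : q = r + (p + 1) := by omega
    linarith [(hA.Aext_add_mem_Icc r (p + 1)).1]
  · rw [show p + 1 = q + (r + 1) by omega]
    linarith [(hA.Aext_add_mem_Icc q (r + 1)).2]
  · omega
  · rw [show r + 1 = (p + 1) + (q + 1) by omega]
    linarith [(hA.Aext_add_mem_Icc (p + 1) (q + 1)).1]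

end ArmSequence

section NodeOrder

variable {n : ℕ} {A : ℕ → ℤ}

lemma nodeGt_iff (hn : 0 < n) (x y : ℕ × ℕ) :
    NodeGt n A x y ↔ ∃ k : ℤ, (y.1 : ℤ) - x.1 + x.2 - y.2 = n * k ∧
      armExt A k < (x.2 : ℤ) - y.2 := by
  have hn' : (0 : ℤ) < n := by exact_mod_cast hn
  constructor
  · rintro (⟨t, hD, h⟩ | ⟨_ | t, hD, h, hne⟩)
    · exact ⟨t, hD, h⟩
    · have hD' : (x.1 : ℤ) - y.1 + y.2 - x.2 = 0 := by simpa using hD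
      have hc : (y.2 : ℤ) ≤ x.2 := by simpa [Aext] using h
      have hc' : (y.2 : ℤ) ≠ x.2 := fun hc' => hne (Prod.ext (by omega) (by omega))
      exact ⟨0, by linarith, show Aext A 0 < _ by simp only [Aext, if_true]; omega⟩
    · refine ⟨.negSucc t, ?_, ?_⟩
      · rw [Int.negSucc_eq]
        push_cast at hD
        linarith
      · simp only [armExt]
        linarith
  · rintro ⟨k | t, hD, h⟩
    · exact .inl ⟨k, hD, h⟩
    · rw [Int.negSucc_eq] at hD
      refine .inr ⟨t + 1, by push_cast; linarith, by simp only [armExt] at h; linarith, ?_⟩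
      rintro rfl
      nlinarith

lemma nodeGt_irrefl (hn : 0 < n) (x : ℕ × ℕ) : ¬ NodeGt n A x x := by
  rw [nodeGt_iff hn]
  rintro ⟨k, hD, h⟩
  obtain rfl : k = 0 := by
    simpa [hn.ne'] using hD.symm
  simp [armExt, Aext] at h

lemma IsArmSeq.nodeGt_trans (hA : IsArmSeq n A) {x y z : ℕ × ℕ}
    (hxy : NodeGt n A x y) (hyz : NodeGt n A y z) : NodeGt n A x z := by
  rw [nodeGt_iff hA.pos] at hxy hyz ⊢
  obtain ⟨j, hj, hxy⟩ := hxy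
  obtain ⟨k, hk, hyz⟩ := hyz
  refine ⟨j + k, by linarith, ?_⟩
  linarith [hA.armExt_add_le j k]

lemma Finset.exists_not_rel_of_trans_of_irrefl {β : Type*} {r : β → β → Prop}
    (htrans : ∀ {a b c}, r a b → r b c → r a c) (hirrefl : ∀ a, ¬ r a a) {s : Finset β}
    (hs : s.Nonempty) : ∃ x ∈ s, ∀ y ∈ s, ¬ r y x := by
  have : IsTrans s (fun a b => r a b) := ⟨fun _ _ _ => htrans⟩
  have : Std.Irrefl (fun a b : s => r a b) := ⟨fun a => hirrefl a⟩
  obtain ⟨⟨x, hx⟩, -, hmin⟩ := (Finite.wellFounded_of_trans_of_irrefl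
    (fun a b : s => r a b)).has_min Set.univ ⟨⟨_, hs.choose_spec⟩, trivial⟩
  exact ⟨x, hx, fun y hy => hmin ⟨y, hy⟩ trivial⟩

end NodeOrder

namespace IsPartition

variable {l : ℕ → ℕ}

lemma antitone (hl : IsPartition l) : Antitone l := antitone_nat_of_succ_le hl.1

lemma apply_conj_le (hl : IsPartition l) (c : ℕ) : l (conj l c) ≤ c :=
  Nat.sInf_mem (s := {a | l a ≤ c}) (hl.2.imp fun _ h => by simp [h])

lemma lt_conj_iff (hl : IsPartition l) {a c : ℕ} : a < conj l c ↔ c < l a := by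
  refine ⟨fun h => not_le.1 (Nat.notMem_of_lt_sInf (s := {a | l a ≤ c}) h),
    fun h => not_le.1 fun h' => ?_⟩
  exact (hl.antitone h').trans (hl.apply_conj_le c) |>.not_gt h

lemma conj_eq_of_removable (hl : IsPartition l) {a c : ℕ} (h : Removable l a c) :
    conj l c = a + 1 :=
  le_antisymm (Nat.sInf_le h.2) (hl.lt_conj_iff.2 (by rw [h.1]; omega))

lemma conj_eq_of_addable (hl : IsPartition l) {b d : ℕ} (h : Addable l b d) :
    conj l d = b := by
  refine le_antisymm (Nat.sInf_le h.1.le) ?_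
  rcases h.2 with rfl | hd
  · exact Nat.zero_le _
  · exact Nat.le_of_pred_lt (hl.lt_conj_iff.2 hd)

lemma exists_removable (hl : IsPartition l) {a : ℕ} (ha : 0 < l a) :
    ∃ a', a ≤ a' ∧ Removable l a' (l a - 1) := by
  set m := conj l (l a - 1)
  have ham : a < m := hl.lt_conj_iff.2 (by omega)
  have hm : l (m - 1) = l a := by
    have := hl.lt_conj_iff.1 (show m - 1 < m by omega)
    exact le_antisymm (hl.antitone (by omega)) (by omega)
  refine ⟨m - 1, by omega, by omega, ?_⟩
  rw [Nat.sub_add_cancel (by omega)]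
  exact hl.apply_conj_le _

lemma finite_removable (hl : IsPartition l) : {z : ℕ × ℕ | Removable l z.1 z.2}.Finite :=
  ((Set.finite_Iio (conj l 0)).image fun a => (a, l a - 1)).subset fun z hz =>
    ⟨z.1, hl.lt_conj_iff.2 (by rw [Set.mem_ofPred_eq, Removable] at hz; omega),
      Prod.ext rfl (by rw [Set.mem_ofPred_eq, Removable] at hz; simp; omega)⟩

lemma mem_ARset {n : ℕ} (hl : IsPartition l) {x : ℕ × ℕ}
    (h : Addable l x.1 x.2 ∨ Removable l x.1 x.2) : x ∈ ARset n l (res n x) := by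
  have hx0 : x.2 ≤ l 0 := by
    have := hl.antitone x.1.zero_le
    rcases h with ⟨h, -⟩ | ⟨h, -⟩ <;> omega
  have hx1 : x.1 ≤ conj l 0 := by
    rcases h with ⟨-, h | h⟩ | ⟨h, -⟩
    · omega
    · have := hl.lt_conj_iff.2 (show 0 < l (x.1 - 1) by omega)
      omega
    · exact (hl.lt_conj_iff.2 (by omega)).le
  simp only [ARset, Finset.mem_filter, Finset.mem_product, Finset.mem_range]
  exact ⟨⟨by omega, by omega⟩, trivial, h⟩

end IsPartition

lemma ARegular.arm_ne {n : ℕ} {A : ℕ → ℤ} {l : ℕ → ℕ} (hreg : ARegular n A l)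
    {a c t : ℕ} (ht : 1 ≤ t) (hc : c < l a)
    (hhook : (l a : ℤ) + conj l c = n * t + a + c + 1) :
    (l a : ℤ) ≠ Aext A t + c + 1 := by
  rw [Aext_of_ne_zero A (by omega)]
  exact fun h => hreg ⟨a, c, t, ht, hc, hhook, h⟩

def slopeKey (n : ℕ) (A : ℕ → ℤ) (u : ℕ) (z : ℕ × ℕ) : ℤ :=
  (n * u - Aext A u) * z.2 + Aext A u * z.1

section SlopeKey

variable {n : ℕ} {A : ℕ → ℤ} {l : ℕ → ℕ} {u a b c d t : ℕ}

lemma slopeKey_add_lt_of_arm_lt (hA : IsArmSeq n A) (hl : IsPartition l)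
    (hreg : ARegular n A l) (hu : 1 ≤ u) (hrem : Removable l a c) (hadd : Addable l b d)
    (hD : (a : ℤ) - b + d - c = n * t) (harm : Aext A t < (d : ℤ) - c) :
    slopeKey n A u (a, c) + ((n - 1) * u + 1) < slopeKey n A u (b, d) := by
  obtain ⟨hac, hac'⟩ := hrem
  obtain ⟨hbd, -⟩ := hadd
  have hcd : c < d := by have := hA.Aext_nonneg t; omega
  have hba : b ≤ a := not_lt.1 fun h => by have := hl.antitone (show a + 1 ≤ b by omega); omega
  have ht : 1 ≤ t := Nat.pos_of_ne_zero fun ht => by subst ht; push_cast at hD; omega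
  have hsep : (d : ℤ) ≠ Aext A t + c + 1 := by
    have := hreg.arm_ne ht (a := b) (c := c) (by omega)
      (by rw [hl.conj_eq_of_removable ⟨hac, hac'⟩, hbd]; push_cast; linarith)
    rwa [hbd] at this
  have hcross := hA.mul_Aext_le_mul_Aext t hu
  have hn : (0 : ℤ) ≤ n := by positivity
  have hkey : slopeKey n A u (b, d) - slopeKey n A u (a, c) =
      n * u * ((d : ℤ) - c) - n * (t * Aext A u) := by
    simp only [slopeKey]
    linear_combination (-Aext A u) * hD
  have h₁ : n * u * (Aext A t + 2) ≤ n * u * ((d : ℤ) - c) :=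
    mul_le_mul_of_nonneg_left (by omega) (by positivity)
  have h₂ := mul_le_mul_of_nonneg_left hcross hn
  nlinarith [hA.Aext_le u]

lemma slopeKey_add_lt_of_le_arm (hA : IsArmSeq n A) (hl : IsPartition l)
    (hreg : ARegular n A l) (hu : b + c < u) (hrem : Removable l a c)
    (hadd : Addable l b d) (hD : (b : ℤ) - a + c - d = n * t)
    (harm : (c : ℤ) - d ≤ Aext A t) :
    slopeKey n A u (a, c) + ((n - 1) * u + 1) < slopeKey n A u (b, d) := by
  obtain ⟨hac, hac'⟩ := hrem
  obtain ⟨hbd, hb⟩ := hadd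
  have hab : a < b := not_le.1 fun h => by
    have := hl.antitone h
    have : (0 : ℤ) ≤ n * t := by positivity
    omega
  have hdc : d ≤ c := by have := hl.antitone (show a + 1 ≤ b by omega); omega
  have ht : 1 ≤ t := Nat.pos_of_ne_zero fun ht => by subst ht; push_cast at hD; omega
  have hsep : (c : ℤ) - d ≠ Aext A t := by
    have := hreg.arm_ne ht (a := a) (c := d) (by omega)
      (by rw [hl.conj_eq_of_addable ⟨hbd, hb⟩, hac]; push_cast; linarith)
    rw [hac] at this
    push_cast at this
    omega
  have hcross := hA.mul_Aext_le_mul_Aext u ht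
  have hn' : (0 : ℤ) ≤ n := by positivity
  have hkey : slopeKey n A u (b, d) - slopeKey n A u (a, c) =
      n * (t * Aext A u) - n * u * ((c : ℤ) - d) := by
    simp only [slopeKey]
    linear_combination Aext A u * hD
  have h₁ : n * u * ((c : ℤ) - d) ≤ n * u * (Aext A t - 1) :=
    mul_le_mul_of_nonneg_left (by omega) (by positivity)
  have h₂ := mul_le_mul_of_nonneg_left hcross hn'
  have htu : (n : ℤ) * t + 1 ≤ u := by linarith
  nlinarith [hA.Aext_le u, hA.sub_one_le_Aext u]

lemma slopeKey_add_lt_of_nodeGt (hA : IsArmSeq n A) (hl : IsPartition l)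
    (hreg : ARegular n A l) (hu : b + c < u) (hrem : Removable l a c)
    (hadd : Addable l b d) (hgt : NodeGt n A (b, d) (a, c)) :
    slopeKey n A u (a, c) + ((n - 1) * u + 1) < slopeKey n A u (b, d) := by
  rcases hgt with ⟨t, hD, harm⟩ | ⟨t, hD, harm, -⟩
  · exact slopeKey_add_lt_of_arm_lt hA hl hreg (by omega) hrem hadd hD harm
  · exact slopeKey_add_lt_of_le_arm hA hl hreg hu hrem hadd hD harm

lemma IsPartition.exists_removable_slopeKey_le (hl : IsPartition l) (hA : IsArmSeq n A)
    (hl0 : 0 < l 0) (hadd : Addable l b d) :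
    ∃ z : ℕ × ℕ, Removable l z.1 z.2 ∧
      slopeKey n A u (b, d) ≤ slopeKey n A u z + ((n - 1) * u + 1) := by
  have hα := hA.sub_one_le_Aext u
  have hα' := hA.Aext_le u
  obtain ⟨hbd, rfl | hb⟩ := hadd
  · obtain ⟨a', -, ha'⟩ := hl.exists_removable hl0
    refine ⟨(a', _), ha', ?_⟩
    simp only [slopeKey, ← hbd]
    push_cast [hl0]
    nlinarith [mul_nonneg (hA.Aext_nonneg u) (Nat.cast_nonneg (α := ℤ) a')]
  · have hb0 : 0 < l (b - 1) := by omega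
    obtain ⟨a', hba', ha'⟩ := hl.exists_removable hb0
    refine ⟨(a', _), ha', ?_⟩
    have hd : (d : ℤ) + 1 ≤ l (b - 1) := by omega
    have hba : (b : ℤ) ≤ a' + 1 := by omega
    simp only [slopeKey]
    push_cast [hb0]
    nlinarith [mul_le_mul_of_nonneg_left hd (show (0 : ℤ) ≤ n * u - Aext A u by nlinarith),
      mul_le_mul_of_nonneg_left hba (hA.Aext_nonneg u)]

end SlopeKey

section Crystal

variable {n : ℕ} {A : ℕ → ℤ} {l : ℕ → ℕ} {i : ZMod n} {x : ℕ × ℕ}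

lemma sgnNode_of_removable (h : Removable l x.1 x.2) : sgnNode l x = -1 := by
  rw [sgnNode, if_neg fun h' => by have := h.1; have := h'.1; omega, if_pos h]

lemma Gnode_pos_of_forall_removable (hx : x ∈ ARset n l i)
    (h : ∀ y ∈ ARset n l i, y = x ∨ NodeGt n A y x → Removable l y.1 y.2) :
    0 < Gnode n A l i x := by
  rw [Gnode, Finset.sum_congr rfl fun y hy =>
    sgnNode_of_removable (h y (Finset.mem_filter.1 hy).1 (Finset.mem_filter.1 hy).2)]
  simpa using Finset.card_pos.2 ⟨x, Finset.mem_filter.2 ⟨hx, .inl rfl⟩⟩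

lemma IsArmSeq.et_ne_none_of_Gnode_pos (hA : IsArmSeq n A) (hx : x ∈ ARset n l i)
    (hpos : 0 < Gnode n A l i x) : et n A l i ≠ none := by
  set ε := epsP n A l i
  have hε : 0 < ε := hpos.trans_le ((Finset.le_fold_max _).2 (.inr ⟨x, hx, le_rfl⟩))
  obtain ⟨z, hz, hzε⟩ := ((Finset.le_fold_max ε).1 le_rfl).resolve_left hε.not_ge
  have hzε' : Gnode n A l i z = ε :=
    le_antisymm (((Finset.fold_max_le ε).1 le_rfl).2 z hz) hzε
  obtain ⟨w, hw, hwmax⟩ := Finset.exists_not_rel_of_trans_of_irrefl (r := NodeGt n A)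
    hA.nodeGt_trans (nodeGt_irrefl hA.pos) (s := (ARset n l i).filter (Gnode n A l i · = ε))
    ⟨z, Finset.mem_filter.2 ⟨hz, hzε'⟩⟩
  rw [Finset.mem_filter] at hw
  rw [et, goodNode, dif_pos ⟨w, hw.1, hε, hw.2,
    fun y hy hyw hyε => hwmax y (Finset.mem_filter.2 ⟨hy, hyε⟩) hyw⟩]
  exact Option.some_ne_none _

lemma Gnode_pos_of_isMax_slopeKey (hA : IsArmSeq n A) (hl : IsPartition l)
    (hreg : ARegular n A l) (hl0 : 0 < l 0) (hx : Removable l x.1 x.2)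
    (hmax : ∀ z : ℕ × ℕ, Removable l z.1 z.2 →
      slopeKey n A (conj l 0 + l 0) z ≤ slopeKey n A (conj l 0 + l 0) x) :
    0 < Gnode n A l (res n x) x := by
  refine Gnode_pos_of_forall_removable (hl.mem_ARset (.inr hx)) ?_
  rintro ⟨b, d⟩ hy (rfl | hyx)
  · exact hx
  simp only [ARset, Finset.mem_filter, Finset.mem_product, Finset.mem_range] at hy
  obtain ⟨⟨hb, -⟩, -, hadd | hrem⟩ := hy
  · obtain ⟨z, hz, hkey⟩ := hl.exists_removable_slopeKey_le hA (u := conj l 0 + l 0) hl0 hadd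
    have hxu : b + x.2 < conj l 0 + l 0 := by
      have := hl.antitone x.1.zero_le
      have := hx.1
      omega
    have := slopeKey_add_lt_of_nodeGt hA hl hreg hxu hx hadd hyx
    linarith [hmax z hz]
  · exact hrem

end Crystal

theorem nonempty_partition_has_good_node_general (n : ℕ)
    (A : ℕ → ℤ) (hA : IsArmSeq n A) (l : ℕ → ℕ) (hl : IsPartition l)
    (hreg : ARegular n A l) (hne : ∃ a, l a ≠ 0) :
    ∃ i : ZMod n, et n A l i ≠ none := by
  obtain ⟨a, ha⟩ := hne
  have hl0 : 0 < l 0 := (Nat.pos_of_ne_zero ha).trans_le (hl.antitone a.zero_le)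
  obtain ⟨r, -, hr⟩ := hl.exists_removable hl0
  obtain ⟨x, hx, hmax⟩ := Set.exists_max_image _ (slopeKey n A (conj l 0 + l 0))
    hl.finite_removable ⟨(r, l 0 - 1), hr⟩
  exact ⟨res n x, hA.et_ne_none_of_Gnode_pos (hl.mem_ARset (.inr hx))
    (Gnode_pos_of_isMax_slopeKey hA hl hreg hl0 hx hmax)⟩

/-- Proposition 5.3 of the paper: every nonempty `A`-regular partition has a good node
of some residue, i.e. `ẽ_i λ ≠ 0` for some `i ∈ ℤ/nℤ`. -/
theorem nonempty_partition_has_good_node (n : ℕ) (hn : 3 ≤ n)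
    (A : ℕ → ℤ) (hA : IsArmSeq n A) (l : ℕ → ℕ) (hl : IsPartition l)
    (hreg : ARegular n A l) (hne : ∃ a, l a ≠ 0) :
    ∃ i : ZMod n, et n A l i ≠ none :=
  nonempty_partition_has_good_node_general n A hA l hl hreg hne

end ArmCrystal
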